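/- arXiv:1110.0583 — 4 statements merged into one kernel-verified Lean document; each statement's English description precedes it below -/
import Mathlib

section
/- The strong chromatic index of the cycle C_n (n ≥ 3) equals 3 if n ≡ 0 (mod 3), equals 5 if n = 5, and equals 4 otherwise. -/
open SimpleGraph
open Fin.CommRing

/-- Two edges of `G` are in conflict (at distance at most one): they are distinct and
some endpoint of one is equal or adjacent to some endpoint of the other. -/
def edgeConflict {V : Type*} (G : SimpleGraph V) (e f : Sym2 V) : Prop :=
  e ≠ f ∧ ∃ a ∈ e, ∃ b ∈ f, a = b ∨ G.Adj a b

/-- A strong edge coloring of `G`: conflicting edges get different colors. -/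
def IsStrongEdgeColoring {V : Type*} (G : SimpleGraph V) (C : Sym2 V → ℕ) : Prop :=
  ∀ e ∈ G.edgeSet, ∀ f ∈ G.edgeSet, edgeConflict G e f → C e ≠ C f

/-- The strong chromatic index: the least `k` such that `G` has a strong edge
coloring using colors `0, …, k-1`. -/
noncomputable def strongChromaticIndex {V : Type*} (G : SimpleGraph V) : ℕ :=
  sInf {k | ∃ C : Sym2 V → ℕ, IsStrongEdgeColoring G C ∧ ∀ e ∈ G.edgeSet, C e < k}

lemma modcase (n : ℕ) (hn : 0 < n) (x : ℕ) (hx : x < 2*n) :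
    (x % n = x ∧ x < n) ∨ (x % n = x - n ∧ n ≤ x) := by
  rcases lt_or_ge x n with h | h
  · exact Or.inl ⟨Nat.mod_eq_of_lt h, h⟩
  · exact Or.inr ⟨by rw [Nat.mod_eq_sub_mod h, Nat.mod_eq_of_lt (by omega)], h⟩

section
variable {n : ℕ} [NeZero n]

lemma val1 (i : Fin n) : (i + 1).val = (i.val + 1) % n := by
  simp [Fin.add_def, Nat.add_mod_mod]

lemma val2 (i : Fin n) : (i + 2).val = (i.val + 2) % n := by
  have h : ((2:Fin n):ℕ) = 2 % n := rfl
  simp [Fin.add_def, h, Nat.add_mod_mod]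

lemma add1_ne (hn : 3 ≤ n) (u : Fin n) : u + 1 ≠ u := by
  intro h
  have h2 := congrArg Fin.val h
  rw [val1] at h2
  have hu := u.isLt
  rcases modcase n (by omega) (u.val + 1) (by omega) with ⟨h', h''⟩ | ⟨h', h''⟩ <;>
    rw [h'] at h2 <;> omega

lemma add2_ne (hn : 3 ≤ n) (u : Fin n) : u + 2 ≠ u := by
  intro h
  have h2 := congrArg Fin.val h
  rw [val2] at h2
  have hu := u.isLt
  rcases modcase n (by omega) (u.val + 2) (by omega) with ⟨h', h''⟩ | ⟨h', h''⟩ <;>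
    rw [h'] at h2 <;> omega

lemma edge_mem (hn : 3 ≤ n) (i : Fin n) : s(i, i+1) ∈ (cycleGraph n).edgeSet := by
  obtain ⟨m, rfl⟩ : ∃ m, n = m + 2 := ⟨n - 2, by omega⟩
  rw [SimpleGraph.mem_edgeSet, cycleGraph_adj]
  right; simp

lemma edge_char (hn : 3 ≤ n) {e : Sym2 (Fin n)} (he : e ∈ (cycleGraph n).edgeSet) :
    ∃ i : Fin n, e = s(i, i+1) := by
  obtain ⟨m, rfl⟩ : ∃ m, n = m + 2 := ⟨n - 2, by omega⟩
  induction e with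
  | h u v =>
    rw [SimpleGraph.mem_edgeSet, cycleGraph_adj] at he
    rcases he with h | h
    · rw [sub_eq_iff_eq_add'] at h
      exact ⟨v, by rw [h, Sym2.eq_swap]⟩
    · rw [sub_eq_iff_eq_add'] at h
      exact ⟨u, by rw [h]⟩

lemma edge_ne1 (hn : 3 ≤ n) (i : Fin n) : s(i, i+1) ≠ s(i+1, i+1+1) := by
  intro h
  rw [Sym2.eq_iff] at h
  rcases h with ⟨h1, -⟩ | ⟨h1, -⟩
  · exact add1_ne hn i h1.symm
  · rw [show i+1+1 = i+2 by ring] at h1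
    exact add2_ne hn i h1.symm

lemma edge_ne2 (hn : 3 ≤ n) (i : Fin n) : s(i, i+1) ≠ s(i+2, i+2+1) := by
  intro h
  rw [Sym2.eq_iff] at h
  rcases h with ⟨h1, -⟩ | ⟨-, h2⟩
  · exact add2_ne hn i h1.symm
  · rw [show i+2 = i+1+1 by ring] at h2
    exact add1_ne hn (i+1) h2.symm

lemma conf1 (hn : 3 ≤ n) (i : Fin n) :
    edgeConflict (cycleGraph n) s(i, i+1) s(i+1, i+1+1) :=
  ⟨edge_ne1 hn i, i+1, by simp, i+1, by simp, Or.inl rfl⟩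

lemma conf2 (hn : 3 ≤ n) (i : Fin n) :
    edgeConflict (cycleGraph n) s(i, i+1) s(i+2, i+2+1) := by
  refine ⟨edge_ne2 hn i, i+1, by simp, i+2, by simp, Or.inr ?_⟩
  obtain ⟨m, hm⟩ : ∃ m, n = m + 2 := ⟨n - 2, by omega⟩
  subst hm
  rw [cycleGraph_adj]
  right; ring

lemma conflict_shape (hn : 3 ≤ n) {i j : Fin n}
    (hc : edgeConflict (cycleGraph n) s(i, i+1) s(j, j+1)) :
    j = i + 1 ∨ j = i + 2 ∨ i = j + 1 ∨ i = j + 2 := by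
  obtain ⟨hne, a, ha, b, hb, hab⟩ := hc
  obtain ⟨m, hm⟩ : ∃ m, n = m + 2 := ⟨n - 2, by omega⟩
  subst hm
  rw [Sym2.mem_iff] at ha hb
  have key : a = b ∨ a = b + 1 ∨ b = a + 1 := by
    rcases hab with h | h
    · exact Or.inl h
    · rw [cycleGraph_adj] at h
      rcases h with h | h
      · rw [sub_eq_iff_eq_add'] at h
        exact Or.inr (Or.inl h)
      · rw [sub_eq_iff_eq_add'] at h
        exact Or.inr (Or.inr h)
  have absu : i = j → False := fun h => hne (by rw [h])
  rcases ha with rfl | rfl <;> rcases hb with rfl | rfl <;>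
      rcases key with h | h | h
  · exact absurd h absu
  · exact Or.inr (Or.inr (Or.inl h))
  · exact Or.inl h
  · exact Or.inr (Or.inr (Or.inl h))
  · exact Or.inr (Or.inr (Or.inr (by linear_combination h)))
  · exact absurd (by linear_combination -h) absu
  · exact Or.inl h.symm
  · exact absurd (by linear_combination h) absu
  · exact Or.inr (Or.inl (by linear_combination h))
  · exact absurd (by linear_combination h) absu
  · exact Or.inr (Or.inr (Or.inl (by linear_combination h)))
  · exact Or.inl (by linear_combination h)
end

section
variable {n : ℕ} [NeZero n]

lemma exists_coloring (hn : 3 ≤ n) (h : Fin n → ℕ) (k : ℕ) (hk : ∀ i, h i < k)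
    (hw1 : ∀ i : Fin n, h i ≠ h (i+1)) (hw2 : ∀ i : Fin n, h i ≠ h (i+2)) :
    ∃ C : Sym2 (Fin n) → ℕ, IsStrongEdgeColoring (cycleGraph n) C ∧
      ∀ e ∈ (cycleGraph n).edgeSet, C e < k := by
  have hsym : ∀ u v : Fin n,
      (if v = u + 1 then h u else if u = v + 1 then h v else 0) =
      (if u = v + 1 then h v else if v = u + 1 then h u else 0) := by
    intro u v
    by_cases h1 : v = u + 1 <;> by_cases h2 : u = v + 1
    · exfalso
      apply add2_ne hn u
      rw [show u + 2 = u + 1 + 1 by ring, ← h1, ← h2]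
    · rw [if_pos h1, if_neg h2, if_pos h1]
    · rw [if_neg h1, if_pos h2, if_pos h2]
    · rw [if_neg h1, if_neg h2, if_neg h2, if_neg h1]
  set C : Sym2 (Fin n) → ℕ := Sym2.lift ⟨fun u v =>
    if v = u + 1 then h u else if u = v + 1 then h v else 0, hsym⟩ with hC
  have ceval : ∀ i : Fin n, C s(i, i+1) = h i := by
    intro i; rw [hC, Sym2.lift_mk]; simp
  refine ⟨C, ?_, ?_⟩
  · intro e he f hf hc
    obtain ⟨i, rfl⟩ := edge_char hn he
    obtain ⟨j, rfl⟩ := edge_char hn hf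
    rw [ceval, ceval]
    rcases conflict_shape hn hc with rfl | rfl | h' | h'
    · exact hw1 i
    · exact hw2 i
    · rw [h']; exact (hw1 j).symm
    · rw [h']; exact (hw2 j).symm
  · intro e he
    obtain ⟨i, rfl⟩ := edge_char hn he
    rw [ceval]; exact hk i

lemma window_coloring (hn : 3 ≤ n) {C : Sym2 (Fin n) → ℕ}
    (hC : IsStrongEdgeColoring (cycleGraph n) C) :
    (∀ i : Fin n, C s(i, i+1) ≠ C s(i+1, i+1+1)) ∧
    (∀ i : Fin n, C s(i, i+1) ≠ C s(i+2, i+2+1)) :=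
  ⟨fun i => hC _ (edge_mem hn i) _ (edge_mem hn (i+1)) (conf1 hn i),
   fun i => hC _ (edge_mem hn i) _ (edge_mem hn (i+2)) (conf2 hn i)⟩

lemma three_le (hn : 3 ≤ n) {C : Sym2 (Fin n) → ℕ} {k : ℕ}
    (hC : IsStrongEdgeColoring (cycleGraph n) C)
    (hb : ∀ e ∈ (cycleGraph n).edgeSet, C e < k) : 3 ≤ k := by
  obtain ⟨w1, w2⟩ := window_coloring hn hC
  have A : C s((0:Fin n), 0+1) ≠ C s(0+1, 0+1+1) := w1 0
  have B : C s((0:Fin n), 0+1) ≠ C s(0+2, 0+2+1) := w2 0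
  have D : C s((0:Fin n)+1, 0+1+1) ≠ C s(0+2, 0+2+1) := by
    rw [show (0:Fin n)+2 = 0+1+1 by ring]
    exact w1 (0+1)
  have b0 : C s((0:Fin n), 0+1) < k := hb _ (edge_mem hn 0)
  have b1 : C s((0:Fin n)+1, 0+1+1) < k := hb _ (edge_mem hn (0+1))
  have b2 : C s((0:Fin n)+2, 0+2+1) < k := hb _ (edge_mem hn (0+2))
  omega

lemma four_le (hn : 3 ≤ n) (hm : n % 3 ≠ 0) {C : Sym2 (Fin n) → ℕ} {k : ℕ}
    (hC : IsStrongEdgeColoring (cycleGraph n) C)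
    (hb : ∀ e ∈ (cycleGraph n).edgeSet, C e < k) : 4 ≤ k := by
  by_contra h4
  obtain ⟨w1, w2⟩ := window_coloring hn hC
  have step : ∀ i : Fin n, C s(i+3, i+3+1) = C s(i, i+1) := by
    intro i
    have a1 : C s(i, i+1) ≠ C s(i+1, i+1+1) := w1 i
    have a2 : C s(i, i+1) ≠ C s(i+2, i+2+1) := w2 i
    have a3 : C s(i+1, i+1+1) ≠ C s(i+2, i+2+1) := by
      rw [show i+2 = i+1+1 by ring]; exact w1 (i+1)
    have a4 : C s(i+1, i+1+1) ≠ C s(i+3, i+3+1) := by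
      rw [show i+3 = i+1+2 by ring]; exact w2 (i+1)
    have a5 : C s(i+2, i+2+1) ≠ C s(i+3, i+3+1) := by
      rw [show i+3 = i+2+1 by ring]; exact w1 (i+2)
    have b0 : C s(i, i+1) < k := hb _ (edge_mem hn i)
    have b1 : C s(i+1, i+1+1) < k := hb _ (edge_mem hn (i+1))
    have b2 : C s(i+2, i+2+1) < k := hb _ (edge_mem hn (i+2))
    have b3 : C s(i+3, i+3+1) < k := hb _ (edge_mem hn (i+3))
    omega
  have per : ∀ (m : ℕ) (i : Fin n),
      C s(i + (3*m : ℕ), (i + (3*m : ℕ)) + 1) = C s(i, i+1) := by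
    intro m
    induction m with
    | zero => intro i; simp
    | succ m ih =>
      intro i
      have e : ((3*(m+1) : ℕ) : Fin n) = ((3*m : ℕ) : Fin n) + 3 := by
        push_cast; ring
      rw [e, ← add_assoc, step (i + (3*m : ℕ)), ih]
  have cop : Nat.Coprime 3 n := (Nat.prime_three.coprime_iff_not_dvd).mpr (by omega)
  obtain ⟨m, -, hm1⟩ := Nat.exists_mul_mod_eq_one_of_coprime cop (by omega)
  have e1 : ((3*m : ℕ) : Fin n) = 1 := by
    apply Fin.ext
    rw [Fin.val_natCast, hm1]
    show 1 = 1 % n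
    rw [Nat.mod_eq_of_lt (by omega)]
  have hper := per m 0
  rw [e1] at hper
  exact w1 0 hper.symm
end

lemma five_le {C : Sym2 (Fin 5) → ℕ} {k : ℕ}
    (hC : IsStrongEdgeColoring (cycleGraph 5) C)
    (hb : ∀ e ∈ (cycleGraph 5).edgeSet, C e < k) : 5 ≤ k := by
  have mem : ∀ i : Fin 5, s(i, i+1) ∈ (cycleGraph 5).edgeSet := fun i =>
    edge_mem (by omega) i
  have conf : ∀ i j : Fin 5, i ≠ j →
      edgeConflict (cycleGraph 5) s(i, i+1) s(j, j+1) := by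
    simp only [edgeConflict]
    decide
  have dist : ∀ i j : Fin 5, i ≠ j → C s(i, i+1) ≠ C s(j, j+1) :=
    fun i j h => hC _ (mem i) _ (mem j) (conf i j h)
  have d01 := dist 0 1 (by decide)
  have d02 := dist 0 2 (by decide)
  have d03 := dist 0 3 (by decide)
  have d04 := dist 0 4 (by decide)
  have d12 := dist 1 2 (by decide)
  have d13 := dist 1 3 (by decide)
  have d14 := dist 1 4 (by decide)
  have d23 := dist 2 3 (by decide)
  have d24 := dist 2 4 (by decide)
  have d34 := dist 3 4 (by decide)
  have b0 := hb _ (mem 0)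
  have b1 := hb _ (mem 1)
  have b2 := hb _ (mem 2)
  have b3 := hb _ (mem 3)
  have b4 := hb _ (mem 4)
  omega

section
variable {n : ℕ} [NeZero n]

lemma win3 (hn : 3 ≤ n) (hm : n % 3 = 0) :
    (∀ i : Fin n, i.val % 3 ≠ ((i+1) : Fin n).val % 3) ∧
    (∀ i : Fin n, i.val % 3 ≠ ((i+2) : Fin n).val % 3) := by
  constructor <;> intro i <;> have hv := i.isLt
  · rw [val1]
    rcases modcase n (by omega) (i.val+1) (by omega) with ⟨h', h''⟩ | ⟨h', h''⟩ <;>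
      rw [h'] <;> omega
  · rw [val2]
    rcases modcase n (by omega) (i.val+2) (by omega) with ⟨h', h''⟩ | ⟨h', h''⟩ <;>
      rw [h'] <;> omega

lemma win4a (hn : 4 ≤ n) (hm : n % 3 = 1) (i : Fin n) :
    ((if i.val = n-1 then 3 else i.val % 3) ≠
      (if ((i+1):Fin n).val = n-1 then 3 else ((i+1):Fin n).val % 3)) ∧
    ((if i.val = n-1 then 3 else i.val % 3) ≠
      (if ((i+2):Fin n).val = n-1 then 3 else ((i+2):Fin n).val % 3)) := by
  have hv := i.isLt
  constructor
  · rw [val1]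
    rcases modcase n (by omega) (i.val+1) (by omega) with ⟨h', h''⟩ | ⟨h', h''⟩ <;>
      rw [h'] <;> split_ifs <;> omega
  · rw [val2]
    rcases modcase n (by omega) (i.val+2) (by omega) with ⟨h', h''⟩ | ⟨h', h''⟩ <;>
      rw [h'] <;> split_ifs <;> omega

lemma win4b (hn : 8 ≤ n) (hm : n % 3 = 2) (i : Fin n) :
    ((if i.val = n-1 ∨ i.val = n-5 then 3 else if i.val = n-4 then 0 else
        if i.val = n-3 then 1 else if i.val = n-2 then 2 else i.val % 3) ≠
      (if ((i+1):Fin n).val = n-1 ∨ ((i+1):Fin n).val = n-5 then 3 else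
        if ((i+1):Fin n).val = n-4 then 0 else if ((i+1):Fin n).val = n-3 then 1 else
        if ((i+1):Fin n).val = n-2 then 2 else ((i+1):Fin n).val % 3)) ∧
    ((if i.val = n-1 ∨ i.val = n-5 then 3 else if i.val = n-4 then 0 else
        if i.val = n-3 then 1 else if i.val = n-2 then 2 else i.val % 3) ≠
      (if ((i+2):Fin n).val = n-1 ∨ ((i+2):Fin n).val = n-5 then 3 else
        if ((i+2):Fin n).val = n-4 then 0 else if ((i+2):Fin n).val = n-3 then 1 else
        if ((i+2):Fin n).val = n-2 then 2 else ((i+2):Fin n).val % 3)) := by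
  have hv := i.isLt
  constructor
  · rw [val1]
    rcases modcase n (by omega) (i.val+1) (by omega) with ⟨h', h''⟩ | ⟨h', h''⟩ <;>
      rw [h'] <;> split_ifs <;> omega
  · rw [val2]
    rcases modcase n (by omega) (i.val+2) (by omega) with ⟨h', h''⟩ | ⟨h', h''⟩ <;>
      rw [h'] <;> split_ifs <;> omega
end

lemma win5 : ∀ i : Fin 5, i.val ≠ ((i+1) : Fin 5).val ∧ i.val ≠ ((i+2) : Fin 5).val := by
  decide


/-- The strong chromatic index of the cycle `C_n` (`n ≥ 3`) is 3 if `3 ∣ n`,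
5 if `n = 5`, and 4 otherwise. -/
theorem strongChromaticIndex_cycleGraph (n : ℕ) (hn : 3 ≤ n) :
    strongChromaticIndex (cycleGraph n) =
      if n % 3 = 0 then 3 else if n = 5 then 5 else 4 := by
  haveI : NeZero n := ⟨by omega⟩
  rw [strongChromaticIndex]
  split_ifs with hm h5
  · obtain ⟨C, hC, hb⟩ := exists_coloring hn (fun i : Fin n => i.val % 3) 3
      (fun i => Nat.mod_lt _ (by omega)) (win3 hn hm).1 (win3 hn hm).2
    refine le_antisymm (Nat.sInf_le ⟨C, hC, hb⟩) (le_csInf ⟨3, C, hC, hb⟩ ?_)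
    rintro k ⟨C', hC', hb'⟩
    exact three_le hn hC' hb'
  · subst h5
    obtain ⟨C, hC, hb⟩ := exists_coloring (by omega) (fun i : Fin 5 => i.val) 5
      (fun i => i.isLt) (fun i => (win5 i).1) (fun i => (win5 i).2)
    refine le_antisymm (Nat.sInf_le ⟨C, hC, hb⟩) (le_csInf ⟨5, C, hC, hb⟩ ?_)
    rintro k ⟨C', hC', hb'⟩
    exact five_le hC' hb'
  · have hex : ∃ C : Sym2 (Fin n) → ℕ, IsStrongEdgeColoring (cycleGraph n) C ∧
        ∀ e ∈ (cycleGraph n).edgeSet, C e < 4 := by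
      rcases (show n % 3 = 1 ∨ n % 3 = 2 by omega) with h1 | h2
      · exact exists_coloring hn
          (fun i : Fin n => if i.val = n-1 then 3 else i.val % 3) 4
          (fun i => by split_ifs <;> omega)
          (fun i => (win4a (by omega) h1 i).1) (fun i => (win4a (by omega) h1 i).2)
      · have h8 : 8 ≤ n := by omega
        exact exists_coloring hn
          (fun i : Fin n => if i.val = n-1 ∨ i.val = n-5 then 3 else
            if i.val = n-4 then 0 else if i.val = n-3 then 1 else
            if i.val = n-2 then 2 else i.val % 3) 4
          (fun i => by split_ifs <;> omega)
          (fun i => (win4b h8 h2 i).1) (fun i => (win4b h8 h2 i).2)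
    obtain ⟨C, hC, hb⟩ := hex
    refine le_antisymm (Nat.sInf_le ⟨C, hC, hb⟩) (le_csInf ⟨4, C, hC, hb⟩ ?_)
    rintro k ⟨C', hC', hb'⟩
    exact four_le hn hm hC' hb'
end

section
/- The strong chromatic index of the wheel W_n (the graph obtained from the cycle C_n by adding a universal hub vertex, n ≥ 3) equals n+3 if n ≡ 0 (mod 3), equals n+5 if n = 5, and equals n+4 otherwise. -/
open SimpleGraph

/-- The wheel `W n`: a cycle on `n` vertices together with a hub vertex (`none`)
adjacent to every cycle vertex. -/
def wheelGraph (n : ℕ) : SimpleGraph (Option (Fin n)) :=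
  SimpleGraph.fromRel (fun u v => match u, v with
    | some i, some j => (cycleGraph n).Adj i j
    | none, some _ => True
    | _, _ => False)

def wheelG1 (n x : ℕ) : ℕ := if x = n - 1 then 3 else x % 3

def wheelG2 (n x : ℕ) : ℕ :=
  if x = n - 4 then 3 else if x = n - 3 then 1 else
    if x = n - 2 then 2 else if x = n - 1 then 3 else x % 3

lemma wheelG1_one {n a : ℕ} (h4 : 4 ≤ n) (hr : n % 3 = 1) (ha : a < n) :
    wheelG1 n ((a + 1) % n) ≠ wheelG1 n a := by
  unfold wheelG1
  rcases Nat.lt_or_ge (a + 1) n with h1 | h1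
  · rw [Nat.mod_eq_of_lt h1]
    split_ifs <;> omega
  · rw [show a + 1 = n by omega, Nat.mod_self]
    split_ifs <;> omega

lemma wheelG1_two {n a : ℕ} (h4 : 4 ≤ n) (hr : n % 3 = 1) (ha : a < n) :
    wheelG1 n ((a + 2) % n) ≠ wheelG1 n a := by
  unfold wheelG1
  rcases Nat.lt_or_ge (a + 2) n with h1 | h1
  · rw [Nat.mod_eq_of_lt h1]
    split_ifs <;> omega
  · rcases Nat.lt_or_ge (a + 1) n with h2 | h2
    · rw [show a + 2 = n by omega, Nat.mod_self]
      split_ifs <;> omega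
    · rw [show a + 2 = n + 1 by omega, Nat.add_mod_left, Nat.mod_eq_of_lt (by omega)]
      split_ifs <;> omega

lemma wheelG2_one {n a : ℕ} (h8 : 8 ≤ n) (hr : n % 3 = 2) (ha : a < n) :
    wheelG2 n ((a + 1) % n) ≠ wheelG2 n a := by
  unfold wheelG2
  rcases Nat.lt_or_ge (a + 1) n with h1 | h1
  · rw [Nat.mod_eq_of_lt h1]
    split_ifs <;> omega
  · rw [show a + 1 = n by omega, Nat.mod_self]
    split_ifs <;> omega

lemma wheelG2_two {n a : ℕ} (h8 : 8 ≤ n) (hr : n % 3 = 2) (ha : a < n) :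
    wheelG2 n ((a + 2) % n) ≠ wheelG2 n a := by
  unfold wheelG2
  rcases Nat.lt_or_ge (a + 2) n with h1 | h1
  · rw [Nat.mod_eq_of_lt h1]
    split_ifs <;> omega
  · rcases Nat.lt_or_ge (a + 1) n with h2 | h2
    · rw [show a + 2 = n by omega, Nat.mod_self]
      split_ifs <;> omega
    · rw [show a + 2 = n + 1 by omega, Nat.add_mod_left, Nat.mod_eq_of_lt (by omega)]
      split_ifs <;> omega

namespace WheelAux

set_option linter.unusedSectionVars false
set_option linter.unusedVariables false

variable {n : ℕ} [NeZero n]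

lemma wheel_adj_none_some (i : Fin n) : (wheelGraph n).Adj none (some i) := by
  simp [wheelGraph, SimpleGraph.fromRel_adj]

lemma wheel_adj_some_some (i j : Fin n) :
    (wheelGraph n).Adj (some i) (some j) ↔ (cycleGraph n).Adj i j := by
  simp only [wheelGraph, SimpleGraph.fromRel_adj]
  constructor
  · rintro ⟨h, h1 | h1⟩
    · exact h1
    · exact h1.symm
  · intro h
    exact ⟨by simpa using h.ne, Or.inl h⟩

lemma val_one (hn : 3 ≤ n) : (1 : Fin n).val = 1 := by
  obtain ⟨m, rfl⟩ : ∃ m, n = m + 2 := ⟨n - 2, by omega⟩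
  exact Fin.val_one _

lemma cyc_adj (hn : 3 ≤ n) (i j : Fin n) :
    (cycleGraph n).Adj i j ↔ j = i + 1 ∨ i = j + 1 := by
  rw [cycleGraph_adj']
  rw [show ((i - j).val = 1) ↔ i - j = 1 by rw [Fin.ext_iff, val_one hn]]
  rw [show ((j - i).val = 1) ↔ j - i = 1 by rw [Fin.ext_iff, val_one hn]]
  rw [sub_eq_iff_eq_add', sub_eq_iff_eq_add']
  tauto

lemma val_succ (hn : 3 ≤ n) (i : Fin n) : (i + 1).val = (i.val + 1) % n := by
  rw [Fin.val_add, val_one hn]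

lemma val_succ2 (hn : 3 ≤ n) (i : Fin n) : (i + 1 + 1).val = (i.val + 2) % n := by
  rw [val_succ hn, val_succ hn, Nat.mod_add_mod]

lemma mod_succ {a : ℕ} (hn : 3 ≤ n) (h : a < n) :
    (a + 1) % n = if a + 1 = n then 0 else a + 1 := by
  split_ifs with h1
  · rw [h1, Nat.mod_self]
  · exact Nat.mod_eq_of_lt (by omega)

lemma mod_succ2 {a : ℕ} (hn : 3 ≤ n) (h : a < n) :
    (a + 2) % n = if a + 2 = n then 0 else if a + 1 = n then 1 else a + 2 := by
  split_ifs with h1 h2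
  · rw [h1, Nat.mod_self]
  · rw [show a + 2 = n + 1 by omega, Nat.add_mod_left]
    exact Nat.mod_eq_of_lt (by omega)
  · exact Nat.mod_eq_of_lt (by omega)

lemma add_one_ne (hn : 3 ≤ n) (x : Fin n) : x + 1 ≠ x := by
  intro h
  have := congrArg Fin.val h
  rw [val_succ hn, mod_succ hn x.isLt] at this
  have hx := x.isLt
  split_ifs at this <;> omega

lemma add_two_ne (hn : 3 ≤ n) (x : Fin n) : x + 1 + 1 ≠ x := by
  intro h
  have := congrArg Fin.val h
  rw [val_succ2 hn, mod_succ2 hn x.isLt] at this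
  have hx := x.isLt
  split_ifs at this <;> omega

lemma cedge_mem (hn : 3 ≤ n) (i : Fin n) :
    s(some i, some (i + 1)) ∈ (wheelGraph n).edgeSet := by
  rw [SimpleGraph.mem_edgeSet, wheel_adj_some_some, cyc_adj hn]
  exact Or.inl rfl

lemma spoke_mem (i : Fin n) :
    s((none : Option (Fin n)), some i) ∈ (wheelGraph n).edgeSet := by
  rw [SimpleGraph.mem_edgeSet]
  exact wheel_adj_none_some i

lemma cedge_ne_cedge (hn : 3 ≤ n) {i j : Fin n} (hij : i ≠ j) :
    s(some i, some (i + 1)) ≠ s(some j, some (j + 1)) := by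
  intro h
  rw [Sym2.eq_iff] at h
  rcases h with ⟨h1, h2⟩ | ⟨h1, h2⟩
  · exact hij (Option.some.inj h1)
  · have e1 : i = j + 1 := Option.some.inj h1
    have e2 : i + 1 = j := Option.some.inj h2
    rw [e1] at e2
    exact add_two_ne hn j e2

lemma spoke_ne_cedge (i j : Fin n) :
    s((none : Option (Fin n)), some i) ≠ s(some j, some (j + 1)) := by
  intro h
  rw [Sym2.eq_iff] at h
  rcases h with ⟨h1, _⟩ | ⟨h1, _⟩ <;> exact nomatch h1

lemma conflict_spoke_spoke {i j : Fin n} (hij : i ≠ j) :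
    edgeConflict (wheelGraph n) s((none : Option (Fin n)), some i) s(none, some j) := by
  refine ⟨?_, none, by simp, none, by simp, Or.inl rfl⟩
  intro h
  rw [Sym2.eq_iff] at h
  rcases h with ⟨_, h2⟩ | ⟨h1, _⟩
  · exact hij (Option.some.inj h2)
  · exact nomatch h1

lemma conflict_spoke_cedge (i j : Fin n) :
    edgeConflict (wheelGraph n) s((none : Option (Fin n)), some i) s(some j, some (j + 1)) :=
  ⟨spoke_ne_cedge i j, none, by simp, some j, by simp, Or.inr (wheel_adj_none_some j)⟩

lemma conflict_cedge_cedge (hn : 3 ≤ n) {i j : Fin n} (hij : i ≠ j)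
    (hrel : j = i + 1 ∨ j = i + 1 + 1 ∨ i = j + 1 ∨ i = j + 1 + 1) :
    edgeConflict (wheelGraph n) s(some i, some (i + 1)) s(some j, some (j + 1)) := by
  refine ⟨cedge_ne_cedge hn hij, ?_⟩
  rcases hrel with rfl | rfl | h | h
  · exact ⟨some (i + 1), by simp, some (i + 1), by simp, Or.inl rfl⟩
  · exact ⟨some (i + 1), by simp, some (i + 1 + 1), by simp,
      Or.inr ((wheel_adj_some_some _ _).mpr ((cyc_adj hn _ _).mpr (Or.inl rfl)))⟩
  · exact ⟨some i, by simp, some (j + 1), by simp, Or.inl (by rw [h])⟩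
  · exact ⟨some i, by simp, some (j + 1), by simp,
      Or.inr ((wheel_adj_some_some _ _).mpr ((cyc_adj hn _ _).mpr (Or.inr h)))⟩

lemma cedge_conflict_rel (hn : 3 ≤ n) {i j : Fin n}
    (h : edgeConflict (wheelGraph n) s(some i, some (i + 1)) s(some j, some (j + 1))) :
    j = i + 1 ∨ j = i + 1 + 1 ∨ i = j + 1 ∨ i = j + 1 + 1 := by
  obtain ⟨hne, a, ha, b, hb, hab⟩ := h
  have hij : i ≠ j := by rintro rfl; exact hne rfl
  rw [Sym2.mem_iff] at ha hb
  rcases ha with rfl | rfl <;> rcases hb with rfl | rfl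
  · rcases hab with h | h
    · exact absurd (Option.some.inj h) hij
    · rw [wheel_adj_some_some, cyc_adj hn] at h
      tauto
  · rcases hab with h | h
    · exact Or.inr (Or.inr (Or.inl (Option.some.inj h)))
    · rw [wheel_adj_some_some, cyc_adj hn] at h
      rcases h with h | h
      · exact absurd (add_right_cancel h).symm hij
      · exact Or.inr (Or.inr (Or.inr h))
  · rcases hab with h | h
    · exact Or.inl (Option.some.inj h).symm
    · rw [wheel_adj_some_some, cyc_adj hn] at h
      rcases h with h | h
      · exact Or.inr (Or.inl h)
      · exact absurd (add_right_cancel h) hij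
  · rcases hab with h | h
    · exact absurd (add_right_cancel (Option.some.inj h)) hij
    · rw [wheel_adj_some_some, cyc_adj hn] at h
      rcases h with h | h
      · exact Or.inl (add_right_cancel h)
      · exact Or.inr (Or.inr (Or.inl (add_right_cancel h)))

lemma edge_cases (hn : 3 ≤ n) {e : Sym2 (Option (Fin n))} (he : e ∈ (wheelGraph n).edgeSet) :
    (∃ i : Fin n, e = s(none, some i)) ∨ ∃ i : Fin n, e = s(some i, some (i + 1)) := by
  induction e using Sym2.ind with
  | _ u v =>
    rw [SimpleGraph.mem_edgeSet] at he
    match u, v with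
    | none, none => exact absurd he (by simp [wheelGraph, SimpleGraph.fromRel_adj])
    | none, some i => exact Or.inl ⟨i, rfl⟩
    | some i, none => exact Or.inl ⟨i, Sym2.eq_swap⟩
    | some i, some j =>
      rw [wheel_adj_some_some, cyc_adj hn] at he
      rcases he with rfl | rfl
      · exact Or.inr ⟨i, rfl⟩
      · exact Or.inr ⟨j, Sym2.eq_swap⟩

/-- Generic upper bound: a good cyclic pattern `G` with `c` colors yields a strong
edge coloring of the wheel with `n + c` colors. -/
lemma ub (hn : 3 ≤ n) (c : ℕ) (G : ℕ → ℕ)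
    (hlt : ∀ x < n, G x < c)
    (h1 : ∀ i : Fin n, G ((i + 1 : Fin n)).val ≠ G i.val)
    (h2 : ∀ i : Fin n, G ((i + 1 + 1 : Fin n)).val ≠ G i.val) :
    (n + c) ∈ {k | ∃ C : Sym2 (Option (Fin n)) → ℕ,
      IsStrongEdgeColoring (wheelGraph n) C ∧ ∀ e ∈ (wheelGraph n).edgeSet, C e < k} := by
  set F : Option (Fin n) → Option (Fin n) → ℕ := fun u v => match u, v with
    | none, none => 0
    | none, some i => i.val
    | some i, none => i.val
    | some i, some j => n + (if j = i + 1 then G i.val else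
        if i = j + 1 then G j.val else 0) with hF
  have hsymm : ∀ a b : Option (Fin n), F a b = F b a := by
    rintro (_ | a) (_ | b) <;> simp only [hF]
    by_cases hab : b = a + 1 <;> by_cases hba : a = b + 1
    · rw [hab] at hba
      exact absurd hba.symm (add_two_ne hn a)
    · simp only [hab, hba, if_true, if_false, if_pos rfl]
      rw [if_neg (fun h => add_two_ne hn a h.symm)]
    · simp only [hab, hba, if_true, if_false, if_pos rfl]
      rw [if_neg (fun h => add_two_ne hn b h.symm)]
    · simp [hab, hba]
  set C : Sym2 (Option (Fin n)) → ℕ := Sym2.lift ⟨F, hsymm⟩ with hC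
  have hCspoke : ∀ i : Fin n, C s(none, some i) = i.val := fun i => rfl
  have hCcedge : ∀ i : Fin n, C s(some i, some (i + 1)) = n + G i.val := by
    intro i
    show F (some i) (some (i + 1)) = n + G i.val
    simp [hF]
  refine ⟨C, ?_, ?_⟩
  · intro e he f hf hc
    rcases edge_cases hn he with ⟨i, rfl⟩ | ⟨i, rfl⟩ <;>
      rcases edge_cases hn hf with ⟨j, rfl⟩ | ⟨j, rfl⟩
    · rw [hCspoke, hCspoke]
      have hij : i ≠ j := by
        rintro rfl
        exact hc.1 rfl
      exact fun h => hij (Fin.val_injective h)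
    · rw [hCspoke, hCcedge]
      have := i.isLt
      omega
    · rw [hCcedge, hCspoke]
      have := j.isLt
      omega
    · rw [hCcedge, hCcedge]
      have hij : i ≠ j := by
        rintro rfl
        exact hc.1 rfl
      rcases cedge_conflict_rel hn hc with h | h | h | h
      · rw [h]
        exact fun hE => h1 i (by omega)
      · rw [h]
        exact fun hE => h2 i (by omega)
      · rw [h]
        exact fun hE => h1 j (by omega)
      · rw [h]
        exact fun hE => h2 j (by omega)
  · intro e he
    rcases edge_cases hn he with ⟨i, rfl⟩ | ⟨i, rfl⟩
    · rw [hCspoke]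
      have := i.isLt
      have hc : 0 < c := (hlt 0 (by omega)).trans_le' (Nat.zero_le _)
      omega
    · rw [hCcedge]
      have := hlt i.val i.isLt
      omega

lemma lb_main (hn : 3 ≤ n) {C : Sym2 (Option (Fin n)) → ℕ} {k : ℕ}
    (hC : IsStrongEdgeColoring (wheelGraph n) C)
    (hk : ∀ e ∈ (wheelGraph n).edgeSet, C e < k) :
    n + (Finset.image (fun i : Fin n => C s(some i, some (i + 1))) Finset.univ).card ≤ k := by
  set T := Finset.image (fun i : Fin n => C s(some i, some (i + 1))) Finset.univ with hT
  set S := Finset.image (fun i : Fin n => C s(none, some i)) Finset.univ with hS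
  have hScard : S.card = n := by
    rw [hS, Finset.card_image_of_injective _ ?_, Finset.card_univ, Fintype.card_fin]
    intro i j h
    by_contra hij
    exact hC _ (spoke_mem i) _ (spoke_mem j) (conflict_spoke_spoke hij) h
  have hdisj : Disjoint S T := by
    rw [Finset.disjoint_left]
    intro a haS haT
    rw [hS, Finset.mem_image] at haS
    rw [hT, Finset.mem_image] at haT
    obtain ⟨i, _, hi⟩ := haS
    obtain ⟨j, _, hj⟩ := haT
    exact hC _ (spoke_mem i) _ (cedge_mem hn j) (conflict_spoke_cedge i j) (hi.trans hj.symm)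
  have hsub : S ∪ T ⊆ Finset.range k := by
    intro a ha
    rw [Finset.mem_range]
    rcases Finset.mem_union.mp ha with h | h
    · rw [hS, Finset.mem_image] at h
      obtain ⟨i, _, rfl⟩ := h
      exact hk _ (spoke_mem i)
    · rw [hT, Finset.mem_image] at h
      obtain ⟨i, _, rfl⟩ := h
      exact hk _ (cedge_mem hn i)
  calc n + T.card = S.card + T.card := by rw [hScard]
    _ = (S ∪ T).card := (Finset.card_union_of_disjoint hdisj).symm
    _ ≤ (Finset.range k).card := Finset.card_le_card hsub
    _ = k := Finset.card_range k

lemma t_succ (hn : 3 ≤ n) {C : Sym2 (Option (Fin n)) → ℕ}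
    (hC : IsStrongEdgeColoring (wheelGraph n) C) (i : Fin n) :
    C s(some (i + 1), some (i + 1 + 1)) ≠ C s(some i, some (i + 1)) :=
  hC _ (cedge_mem hn _) _ (cedge_mem hn _)
    (conflict_cedge_cedge hn (add_one_ne hn i) (Or.inr (Or.inr (Or.inl rfl))))

lemma t_succ2 (hn : 3 ≤ n) {C : Sym2 (Option (Fin n)) → ℕ}
    (hC : IsStrongEdgeColoring (wheelGraph n) C) (i : Fin n) :
    C s(some (i + 1 + 1), some (i + 1 + 1 + 1)) ≠ C s(some i, some (i + 1)) :=
  hC _ (cedge_mem hn _) _ (cedge_mem hn _)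
    (conflict_cedge_cedge hn (add_two_ne hn i) (Or.inr (Or.inr (Or.inr rfl))))

lemma three_le_card (hn : 3 ≤ n) (t : Fin n → ℕ)
    (h1 : ∀ i : Fin n, t (i + 1) ≠ t i) (h2 : ∀ i : Fin n, t (i + 1 + 1) ≠ t i)
    {T : Finset ℕ} (hT : ∀ i, t i ∈ T) : 3 ≤ T.card := by
  have hsub : ({t (0 + 1 + 1), t (0 + 1), t 0} : Finset ℕ) ⊆ T := by
    intro a ha
    simp only [Finset.mem_insert, Finset.mem_singleton] at ha
    rcases ha with rfl | rfl | rfl <;> exact hT _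
  refine le_trans (le_of_eq ?_) (Finset.card_le_card hsub)
  have hab : t (0 + 1 + 1) ∉ ({t (0 + 1), t 0} : Finset ℕ) := by
    simp only [Finset.mem_insert, Finset.mem_singleton]
    push_neg
    exact ⟨h1 (0 + 1), h2 0⟩
  have hbc : t (0 + 1) ∉ ({t 0} : Finset ℕ) := by
    simp only [Finset.mem_singleton]
    exact h1 0
  rw [Finset.card_insert_of_notMem hab, Finset.card_insert_of_notMem hbc,
    Finset.card_singleton]

open Fin.NatCast Fin.CommRing in
lemma four_le_card (hn : 3 ≤ n) (h3 : n % 3 ≠ 0) (t : Fin n → ℕ)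
    (h1 : ∀ i : Fin n, t (i + 1) ≠ t i) (h2 : ∀ i : Fin n, t (i + 1 + 1) ≠ t i)
    {T : Finset ℕ} (hT : ∀ i, t i ∈ T) : 4 ≤ T.card := by
  by_contra hlt
  push_neg at hlt
  have step : ∀ i : Fin n, t (i + 1 + 1 + 1) = t i := by
    intro i
    have hxy : t (i + 1) ≠ t (i + 1 + 1) := (h1 (i + 1)).symm
    have hm : ∀ a, a ∈ T → a ≠ t (i + 1) → a ≠ t (i + 1 + 1) →
        a ∈ (T.erase (t (i + 1))).erase (t (i + 1 + 1)) := by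
      intro a ha h1' h2'
      exact Finset.mem_erase.mpr ⟨h2', Finset.mem_erase.mpr ⟨h1', ha⟩⟩
    have hcard : ((T.erase (t (i + 1))).erase (t (i + 1 + 1))).card ≤ 1 := by
      have e1 : (T.erase (t (i + 1))).card = T.card - 1 := Finset.card_erase_of_mem (hT _)
      have e2 : ((T.erase (t (i + 1))).erase (t (i + 1 + 1))).card
          = (T.erase (t (i + 1))).card - 1 :=
        Finset.card_erase_of_mem (Finset.mem_erase.mpr ⟨hxy.symm, hT _⟩)
      omega
    exact Finset.card_le_one.mp hcard _
      (hm _ (hT _) (h2 (i + 1)) (h1 (i + 1 + 1))) _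
      (hm _ (hT _) (h1 i).symm (h2 i).symm)
  have iter : ∀ (m : ℕ) (i : Fin n), t (i + (3 * m : ℕ)) = t i := by
    intro m
    induction m with
    | zero => intro i; simp
    | succ m ih =>
      intro i
      have hc : ((3 * (m + 1) : ℕ) : Fin n) = ((3 * m : ℕ) : Fin n) + 1 + 1 + 1 := by
        push_cast
        ring
      rw [hc, show i + (((3 * m : ℕ) : Fin n) + 1 + 1 + 1)
          = (i + ((3 * m : ℕ) : Fin n)) + 1 + 1 + 1 by ring, step, ih]
  have hcop : Nat.Coprime 3 n := (Nat.prime_three.coprime_iff_not_dvd).mpr (fun hd => h3 (by omega))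
  obtain ⟨m, -, hm⟩ := Nat.exists_mul_mod_eq_one_of_coprime hcop (by omega)
  have hone : ((3 * m : ℕ) : Fin n) = 1 := by
    rw [Fin.ext_iff, Fin.val_natCast, val_one hn]
    exact hm
  have hfin := iter m 0
  rw [hone] at hfin
  exact h1 0 hfin

end WheelAux

/-- The strong chromatic index of the wheel `W_n` (`n ≥ 3`) is `n+3` if `3 ∣ n`,
`n+5` if `n = 5`, and `n+4` otherwise. -/
theorem strongChromaticIndex_wheelGraph (n : ℕ) (hn : 3 ≤ n) :
    strongChromaticIndex (wheelGraph n) =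
      if n % 3 = 0 then n + 3 else if n = 5 then n + 5 else n + 4 := by
  haveI hNZ : NeZero n := ⟨by omega⟩
  rw [strongChromaticIndex]
  split_ifs with h3 h5
  · -- n ≡ 0 (mod 3)
    have hdvd : (3 : ℕ) ∣ n := Nat.dvd_of_mod_eq_zero h3
    have hmem : (n + 3) ∈ {k | ∃ C : Sym2 (Option (Fin n)) → ℕ,
        IsStrongEdgeColoring (wheelGraph n) C ∧ ∀ e ∈ (wheelGraph n).edgeSet, C e < k} := by
      refine WheelAux.ub hn 3 (fun x => x % 3) ?_ ?_ ?_
      · intro x _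
        exact Nat.mod_lt _ (by omega)
      · intro i
        simp only [WheelAux.val_succ hn]
        have hd := Nat.mod_mod_of_dvd (i.val + 1) hdvd
        omega
      · intro i
        simp only [WheelAux.val_succ2 hn]
        have hd := Nat.mod_mod_of_dvd (i.val + 2) hdvd
        omega
    refine le_antisymm (Nat.sInf_le hmem) (le_csInf ⟨_, hmem⟩ ?_)
    rintro k ⟨C, hC, hk⟩
    have hlb := WheelAux.lb_main hn hC hk
    have hTmem : ∀ i : Fin n, C s(some i, some (i + 1)) ∈
        Finset.image (fun i : Fin n => C s(some i, some (i + 1))) Finset.univ :=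
      fun i => Finset.mem_image_of_mem _ (Finset.mem_univ i)
    have hcard := WheelAux.three_le_card hn (fun i => C s(some i, some (i + 1)))
      (fun i => WheelAux.t_succ hn hC i) (fun i => WheelAux.t_succ2 hn hC i) hTmem
    omega
  · -- n = 5
    subst h5
    clear hNZ
    have hmem : (5 + 5) ∈ {k | ∃ C : Sym2 (Option (Fin 5)) → ℕ,
        IsStrongEdgeColoring (wheelGraph 5) C ∧ ∀ e ∈ (wheelGraph 5).edgeSet, C e < k} := by
      have d1 : ∀ i : Fin 5, ((i + 1 : Fin 5)).val ≠ i.val := by decide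
      have d2 : ∀ i : Fin 5, ((i + 1 + 1 : Fin 5)).val ≠ i.val := by decide
      exact WheelAux.ub (by norm_num) 5 (fun x => x) (fun x hx => hx) d1 d2
    refine le_antisymm (Nat.sInf_le hmem) (le_csInf ⟨_, hmem⟩ ?_)
    rintro k ⟨C, hC, hk⟩
    have hlb := WheelAux.lb_main (by norm_num) hC hk
    set t : Fin 5 → ℕ := fun i => C s(some i, some (i + 1)) with ht
    have h1' : ∀ i : Fin 5, t (i + 1) ≠ t i := fun i => WheelAux.t_succ (by norm_num) hC i
    have h2' : ∀ i : Fin 5, t (i + 1 + 1) ≠ t i := fun i => WheelAux.t_succ2 (by norm_num) hC i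
    have hrel : ∀ i j : Fin 5, i ≠ j →
        (j = i + 1 ∨ j = i + 1 + 1 ∨ i = j + 1 ∨ i = j + 1 + 1) := by decide
    have hinj : Function.Injective t := by
      intro i j h
      by_contra hij
      rcases hrel i j hij with h' | h' | h' | h'
      · rw [h'] at h
        exact (h1' i) h.symm
      · rw [h'] at h
        exact (h2' i) h.symm
      · rw [h'] at h
        exact (h1' j) h
      · rw [h'] at h
        exact (h2' j) h
    have hcard : (Finset.image t Finset.univ).card = 5 := by
      rw [Finset.card_image_of_injective _ hinj, Finset.card_univ, Fintype.card_fin]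
    omega
  · -- the remaining case: n % 3 ∈ {1, 2}, n ≠ 5
    have hmem : (n + 4) ∈ {k | ∃ C : Sym2 (Option (Fin n)) → ℕ,
        IsStrongEdgeColoring (wheelGraph n) C ∧ ∀ e ∈ (wheelGraph n).edgeSet, C e < k} := by
      rcases (by omega : n % 3 = 1 ∨ n % 3 = 2) with hr | hr
      · refine WheelAux.ub hn 4 (wheelG1 n) ?_ ?_ ?_
        · intro x _
          show (if x = n - 1 then 3 else x % 3) < 4
          split_ifs <;> omega
        · intro i
          rw [WheelAux.val_succ hn]
          exact wheelG1_one (by omega) hr i.isLt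
        · intro i
          rw [WheelAux.val_succ2 hn]
          exact wheelG1_two (by omega) hr i.isLt
      · have h8 : 8 ≤ n := by omega
        refine WheelAux.ub hn 4 (wheelG2 n) ?_ ?_ ?_
        · intro x _
          show (if x = n - 4 then 3 else if x = n - 3 then 1 else
            if x = n - 2 then 2 else if x = n - 1 then 3 else x % 3) < 4
          split_ifs <;> omega
        · intro i
          rw [WheelAux.val_succ hn]
          exact wheelG2_one h8 hr i.isLt
        · intro i
          rw [WheelAux.val_succ2 hn]
          exact wheelG2_two h8 hr i.isLt
    refine le_antisymm (Nat.sInf_le hmem) (le_csInf ⟨_, hmem⟩ ?_)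
    rintro k ⟨C, hC, hk⟩
    have hlb := WheelAux.lb_main hn hC hk
    have hTmem : ∀ i : Fin n, C s(some i, some (i + 1)) ∈
        Finset.image (fun i : Fin n => C s(some i, some (i + 1))) Finset.univ :=
      fun i => Finset.mem_image_of_mem _ (Finset.mem_univ i)
    have hcard := WheelAux.four_le_card hn h3 (fun i => C s(some i, some (i + 1)))
      (fun i => WheelAux.t_succ hn hC i) (fun i => WheelAux.t_succ2 hn hC i) hTmem
    omega
end

section
/- For any tree T, the strong chromatic index of T equals the maximum over all edges (u,v) of T of d(u) + d(v) - 1, where d denotes vertex degree in T. -/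
open SimpleGraph

namespace StrongTreeAux

open SimpleGraph Walk

variable {V : Type*}

lemma edgeConflict_symm {T : SimpleGraph V} {e f : Sym2 V} (h : edgeConflict T e f) :
    edgeConflict T f e := by
  obtain ⟨hne, a, ha, b, hb, hab⟩ := h
  exact ⟨hne.symm, b, hb, a, ha, by tauto⟩

/-- In a tree, adjacent vertices have different distances to any root. -/
lemma tree_adj_dist_ne {T : SimpleGraph V} (hT : T.IsTree) (r : V) {a b : V}
    (hab : T.Adj a b) : T.dist r a ≠ T.dist r b := by
  classical
  intro h
  have hc := hT.isConnected
  obtain ⟨pa, hpa, hla⟩ := hc.exists_path_of_dist r a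
  obtain ⟨pb, hpb, hlb⟩ := hc.exists_path_of_dist r b
  by_cases hb : b ∈ pa.support
  · have h1 : T.dist r b ≤ (pa.takeUntil b hb).length := SimpleGraph.dist_le _
    have h2 := congrArg Walk.length (pa.take_spec hb)
    rw [Walk.length_append] at h2
    have h3 : (pa.dropUntil b hb).length ≠ 0 := by
      intro h0
      exact hab.ne' (Walk.eq_of_length_eq_zero h0)
    omega
  · have hq : (Walk.cons hab.symm pa.reverse).IsPath := by
      rw [Walk.cons_isPath_iff]
      constructor
      · exact hpa.reverse
      · simpa [Walk.support_reverse] using hb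
    have huniq := (isTree_iff_existsUnique_path.mp hT).2 b r
    have heq : Walk.cons hab.symm pa.reverse = pb.reverse :=
      huniq.unique hq hpb.reverse
    have hlen := congrArg Walk.length heq
    simp only [Walk.length_cons, Walk.length_reverse] at hlen
    omega

/-- In a tree, distances of adjacent vertices differ by exactly one. -/
lemma tree_adj_dist {T : SimpleGraph V} (hT : T.IsTree) (r : V) {a b : V}
    (hab : T.Adj a b) :
    T.dist r b = T.dist r a + 1 ∨ T.dist r a = T.dist r b + 1 := by
  have hc := hT.isConnected
  have h1 : T.dist r b ≤ T.dist r a + 1 := by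
    have := hc.dist_triangle (u := r) (v := a) (w := b)
    rwa [(SimpleGraph.dist_eq_one_iff_adj).mpr hab] at this
  have h2 : T.dist r a ≤ T.dist r b + 1 := by
    have := hc.dist_triangle (u := r) (v := b) (w := a)
    rwa [(SimpleGraph.dist_eq_one_iff_adj).mpr hab.symm] at this
  have h3 := tree_adj_dist_ne hT r hab
  omega

/-- In a tree, a vertex has at most one neighbor closer to the root. -/
lemma tree_unique_parent {T : SimpleGraph V} (hT : T.IsTree) (r : V) {v a b : V}
    (ha : T.Adj a v) (hb : T.Adj b v)
    (hda : T.dist r a + 1 = T.dist r v) (hdb : T.dist r b + 1 = T.dist r v) :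
    a = b := by
  classical
  have hc := hT.isConnected
  obtain ⟨pa, hpa, hla⟩ := hc.exists_path_of_dist r a
  obtain ⟨pb, hpb, hlb⟩ := hc.exists_path_of_dist r b
  have hva : v ∉ pa.support := by
    intro hv
    have h1 : T.dist r v ≤ (pa.takeUntil v hv).length := SimpleGraph.dist_le _
    have h2 := Walk.length_takeUntil_le pa hv
    omega
  have hvb : v ∉ pb.support := by
    intro hv
    have h1 : T.dist r v ≤ (pb.takeUntil v hv).length := SimpleGraph.dist_le _
    have h2 := Walk.length_takeUntil_le pb hv
    omega
  have hqa : (Walk.cons ha.symm pa.reverse).IsPath := by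
    rw [Walk.cons_isPath_iff]
    exact ⟨hpa.reverse, by simpa [Walk.support_reverse] using hva⟩
  have hqb : (Walk.cons hb.symm pb.reverse).IsPath := by
    rw [Walk.cons_isPath_iff]
    exact ⟨hpb.reverse, by simpa [Walk.support_reverse] using hvb⟩
  have huniq := (isTree_iff_existsUnique_path.mp hT).2 v r
  have heq : Walk.cons ha.symm pa.reverse = Walk.cons hb.symm pb.reverse :=
    (huniq.unique hqa hqb)
  have := congrArg (fun w => Walk.getVert w 1) heq
  simpa [Walk.getVert_cons_succ, Walk.getVert_zero] using this

/-- Every non-root vertex of a connected graph has a neighbor closer to the root. -/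
lemma exists_parent {T : SimpleGraph V} (hc : T.Connected) (r : V) {v : V} (hv : v ≠ r) :
    ∃ u, T.Adj u v ∧ T.dist r u + 1 = T.dist r v := by
  obtain ⟨p, hp, hl⟩ := hc.exists_path_of_dist r v
  obtain ⟨u, hadj, q, hq⟩ := Walk.exists_eq_cons_of_ne hv p.reverse
  refine ⟨u, hadj.symm, ?_⟩
  have h1 : T.dist r u ≤ q.length := by
    rw [SimpleGraph.dist_comm]
    exact SimpleGraph.dist_le q
  have h2 : q.length + 1 = T.dist r v := by
    have := congrArg Walk.length hq
    simp only [Walk.length_reverse, Walk.length_cons] at this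
    omega
  have h3 : T.dist r v ≤ T.dist r u + 1 := by
    have := hc.dist_triangle (u := r) (v := u) (w := v)
    rwa [(SimpleGraph.dist_eq_one_iff_adj).mpr hadj.symm] at this
  omega

/-- Depth of an edge: max distance of its endpoints from the root. -/
noncomputable def edepth (T : SimpleGraph V) (r : V) (e : Sym2 V) : ℕ :=
  Sym2.lift ⟨fun a b => max (T.dist r a) (T.dist r b), fun a b => max_comm _ _⟩ e

@[simp] lemma edepth_mk (T : SimpleGraph V) (r : V) (a b : V) :
    edepth T r s(a, b) = max (T.dist r a) (T.dist r b) := rfl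

lemma dist_le_edepth {T : SimpleGraph V} {r : V} {e : Sym2 V} {z : V} (hz : z ∈ e) :
    T.dist r z ≤ edepth T r e := by
  induction e with
  | _ x y =>
    rw [Sym2.mem_iff] at hz
    rcases hz with rfl | rfl
    · exact le_max_left _ _
    · exact le_max_right _ _

/-- Rank of an edge: depth with an injective tiebreak. -/
noncomputable def erank (T : SimpleGraph V) (r : V) (enc : Sym2 V → ℕ) (N : ℕ)
    (e : Sym2 V) : ℕ :=
  enc e + edepth T r e * N

/-- The greedy strong edge coloring, by well-founded recursion on the rank. -/
noncomputable def greedy (T : SimpleGraph V) (r : V) (enc : Sym2 V → ℕ) (N : ℕ)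
    (e : Sym2 V) : ℕ :=
  sInf {n | ∀ f, f ∈ T.edgeSet → edgeConflict T e f →
      erank T r enc N f < erank T r enc N e → greedy T r enc N f ≠ n}
termination_by erank T r enc N e
decreasing_by assumption

lemma greedy_eq (T : SimpleGraph V) (r : V) (enc : Sym2 V → ℕ) (N : ℕ) (e : Sym2 V) :
    greedy T r enc N e = sInf {n | ∀ f, f ∈ T.edgeSet → edgeConflict T e f →
      erank T r enc N f < erank T r enc N e → greedy T r enc N f ≠ n} := by
  rw [greedy]

lemma greedy_set_nonempty [Finite V] (T : SimpleGraph V) (r : V) (enc : Sym2 V → ℕ)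
    (N : ℕ) (e : Sym2 V) :
    {n | ∀ f, f ∈ T.edgeSet → edgeConflict T e f →
      erank T r enc N f < erank T r enc N e → greedy T r enc N f ≠ n}.Nonempty := by
  classical
  haveI : Finite (Sym2 V) := Finite.of_surjective (fun p : V × V => s(p.1, p.2))
    (fun z => by induction z with | _ x y => exact ⟨(x, y), rfl⟩)
  have hfin : (Set.range fun f : {f : Sym2 V // f ∈ T.edgeSet ∧ edgeConflict T e f ∧
      erank T r enc N f < erank T r enc N e} => greedy T r enc N f.1).Finite :=
    Set.finite_range _
  obtain ⟨n, hn⟩ := hfin.infinite_compl.nonempty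
  exact ⟨n, fun f hf hcf hr h => hn ⟨⟨f, hf, hcf, hr⟩, h⟩⟩

lemma greedy_valid [Finite V] (T : SimpleGraph V) (r : V) (enc : Sym2 V → ℕ) (N : ℕ)
    {e f : Sym2 V} (hf : f ∈ T.edgeSet) (hcf : edgeConflict T e f)
    (hr : erank T r enc N f < erank T r enc N e) :
    greedy T r enc N f ≠ greedy T r enc N e := by
  have h := Nat.sInf_mem (greedy_set_nonempty T r enc N e)
  rw [greedy_eq T r enc N e]
  exact fun hh => h f hf hcf hr hh

lemma greedy_le (T : SimpleGraph V) (r : V) (enc : Sym2 V → ℕ) (N : ℕ) {e : Sym2 V} {n : ℕ}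
    (hn : ∀ f, f ∈ T.edgeSet → edgeConflict T e f →
      erank T r enc N f < erank T r enc N e → greedy T r enc N f ≠ n) :
    greedy T r enc N e ≤ n := by
  rw [greedy_eq]
  exact Nat.sInf_le hn

lemma erank_ne (T : SimpleGraph V) (r : V) {enc : Sym2 V → ℕ} {N : ℕ}
    (hN : ∀ e, enc e < N) (hinj : Function.Injective enc) {e f : Sym2 V} (h : e ≠ f) :
    erank T r enc N e ≠ erank T r enc N f := by
  intro hef
  apply h
  apply hinj
  have h1 : erank T r enc N e % N = enc e := by
    rw [erank, Nat.add_mul_mod_self_right, Nat.mod_eq_of_lt (hN e)]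
  have h2 : erank T r enc N f % N = enc f := by
    rw [erank, Nat.add_mul_mod_self_right, Nat.mod_eq_of_lt (hN f)]
  rw [← h1, ← h2, hef]

lemma edepth_le_of_erank_lt (T : SimpleGraph V) (r : V) {enc : Sym2 V → ℕ} {N : ℕ}
    (hN : ∀ e, enc e < N) {e f : Sym2 V}
    (h : erank T r enc N f < erank T r enc N e) :
    edepth T r f ≤ edepth T r e := by
  by_contra hd
  push_neg at hd
  have h1 : (edepth T r e + 1) * N ≤ edepth T r f * N :=
    Nat.mul_le_mul_right N hd
  have h2 : erank T r enc N e < (edepth T r e + 1) * N := by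
    rw [erank]
    have := hN e
    nlinarith
  have h3 : edepth T r f * N ≤ erank T r enc N f := Nat.le_add_left _ _
  omega

/-- Structure of conflicting edges of bounded depth: they hit `p` or the parent `w` of `p`. -/
lemma conflict_endpoint {T : SimpleGraph V} (hT : T.IsTree) (r : V) {p c w : V}
    (hpc : T.Adj p c) (hd : T.dist r p + 1 = T.dist r c)
    (hw : (T.dist r p = 0 ∧ w = p) ∨ (T.Adj w p ∧ T.dist r w + 1 = T.dist r p))
    {f : Sym2 V} (hf : f ∈ T.edgeSet) (hconf : edgeConflict T s(p, c) f)
    (hdepth : ∀ z ∈ f, T.dist r z ≤ T.dist r c) :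
    p ∈ f ∨ w ∈ f := by
  classical
  obtain ⟨hne, a, ha, b, hb, hab⟩ := hconf
  rw [Sym2.mem_iff] at ha
  have sub1 : ∀ x, x ∈ f → T.Adj p x → T.dist r x = T.dist r c → p ∈ f := by
    intro x hxf hpx hdx
    obtain ⟨y, hfy⟩ := Sym2.mem_iff_exists.mp hxf
    have hxy : T.Adj x y := by rw [hfy] at hf; exact hf
    have hy : T.dist r y ≤ T.dist r c := hdepth y (by rw [hfy]; exact Sym2.mem_mk_right x y)
    rcases tree_adj_dist hT r hxy with h1 | h1
    · omega
    · have hyp : y = p := tree_unique_parent hT r hxy.symm hpx (by omega) (by omega)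
      rw [hfy, ← hyp]
      exact Sym2.mem_mk_right x y
  rcases hab with heq | hadj
  · rcases ha with hap | hac
    · rw [← heq, hap] at hb
      exact Or.inl hb
    · exfalso
      rw [← heq, hac] at hb
      obtain ⟨y, hfy⟩ := Sym2.mem_iff_exists.mp hb
      have hcy : T.Adj c y := by rw [hfy] at hf; exact hf
      have hy : T.dist r y ≤ T.dist r c := hdepth y (by rw [hfy]; exact Sym2.mem_mk_right c y)
      rcases tree_adj_dist hT r hcy with h1 | h1
      · omega
      · have hyp : y = p := tree_unique_parent hT r hcy.symm hpc (by omega) hd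
        apply hne
        rw [hfy, hyp, Sym2.eq_swap]
  · rcases ha with hap | hac
    · rw [hap] at hadj
      rcases tree_adj_dist hT r hadj with h1 | h1
      · exact Or.inl (sub1 b hb hadj (by omega))
      · rcases hw with ⟨h0, hwp⟩ | ⟨hwp, hwd⟩
        · omega
        · have hbw : b = w := tree_unique_parent hT r hadj.symm hwp (by omega) hwd
          exact Or.inr (hbw ▸ hb)
    · rw [hac] at hadj
      have hbd : T.dist r b ≤ T.dist r c := hdepth b hb
      rcases tree_adj_dist hT r hadj with h1 | h1
      · omega
      · have hbp : b = p := tree_unique_parent hT r hadj.symm hpc (by omega) hd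
        exact Or.inl (hbp ▸ hb)

/-- Lower bound: any strong edge coloring with colors `< k` forces
`d(u) + d(v) - 1 ≤ k` for each edge. -/
lemma lower_bound [Fintype V] {T : SimpleGraph V} [DecidableRel T.Adj]
    {C : Sym2 V → ℕ} {k : ℕ} (hC : IsStrongEdgeColoring T C)
    (hk : ∀ e ∈ T.edgeSet, C e < k) {u v : V} (h : T.Adj u v) :
    T.degree u + T.degree v - 1 ≤ k := by
  classical
  set U : Finset (Sym2 V) := T.incidenceFinset u ∪ T.incidenceFinset v with hU
  have hmem : ∀ e ∈ U, e ∈ T.edgeSet ∧ (u ∈ e ∨ v ∈ e) := by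
    intro e he
    rw [hU, Finset.mem_union, SimpleGraph.mem_incidenceFinset,
      SimpleGraph.mem_incidenceFinset] at he
    rcases he with he | he
    · exact ⟨he.1, Or.inl he.2⟩
    · exact ⟨he.1, Or.inr he.2⟩
  have hcard : U.card = T.degree u + T.degree v - 1 := by
    have hI : T.incidenceFinset u ∩ T.incidenceFinset v = {s(u, v)} := by
      ext e
      simp only [Finset.mem_inter, SimpleGraph.mem_incidenceFinset, Finset.mem_singleton]
      constructor
      · rintro ⟨⟨he1, hu⟩, ⟨he2, hv⟩⟩
        exact (Sym2.mem_and_mem_iff h.ne).mp ⟨hu, hv⟩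
      · rintro rfl
        exact ⟨⟨h, Sym2.mem_mk_left u v⟩, ⟨h, Sym2.mem_mk_right u v⟩⟩
    have h2 := Finset.card_union_add_card_inter (T.incidenceFinset u) (T.incidenceFinset v)
    rw [hI, Finset.card_singleton, SimpleGraph.card_incidenceFinset_eq_degree,
      SimpleGraph.card_incidenceFinset_eq_degree, ← hU] at h2
    omega
  have hinj : Set.InjOn C U := by
    intro e he f hf hef
    by_contra hne
    obtain ⟨he1, he2⟩ := hmem e he
    obtain ⟨hf1, hf2⟩ := hmem f hf
    refine hC e he1 f hf1 ⟨hne, ?_⟩ hef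
    obtain ⟨x, hx1, hx2⟩ : ∃ x, (x = u ∨ x = v) ∧ x ∈ e := by
      rcases he2 with h' | h'
      exacts [⟨u, Or.inl rfl, h'⟩, ⟨v, Or.inr rfl, h'⟩]
    obtain ⟨y, hy1, hy2⟩ : ∃ y, (y = u ∨ y = v) ∧ y ∈ f := by
      rcases hf2 with h' | h'
      exacts [⟨u, Or.inl rfl, h'⟩, ⟨v, Or.inr rfl, h'⟩]
    refine ⟨x, hx2, y, hy2, ?_⟩
    rcases hx1 with rfl | rfl <;> rcases hy1 with rfl | rfl
    · exact Or.inl rfl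
    · exact Or.inr h
    · exact Or.inr h.symm
    · exact Or.inl rfl
  have himg : U.image C ⊆ Finset.range k := by
    intro n hn
    rw [Finset.mem_image] at hn
    obtain ⟨e, he, rfl⟩ := hn
    exact Finset.mem_range.mpr (hk e (hmem e he).1)
  have hfin := Finset.card_le_card himg
  rw [Finset.card_image_of_injOn hinj, Finset.card_range, hcard] at hfin
  exact hfin

/-- Upper bound: the greedy coloring works with `M` colors. -/
lemma exists_strong_coloring [Fintype V] (T : SimpleGraph V) [DecidableRel T.Adj]
    (hT : T.IsTree) (M : ℕ)
    (hM : ∀ u v, T.Adj u v → T.degree u + T.degree v - 1 ≤ M) :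
    ∃ C : Sym2 V → ℕ, IsStrongEdgeColoring T C ∧ ∀ e ∈ T.edgeSet, C e < M := by
  classical
  obtain ⟨r⟩ := hT.isConnected.nonempty
  set N : ℕ := Fintype.card (Sym2 V) + 1 with hNdef
  set enc : Sym2 V → ℕ := fun e => ((Fintype.equivFin (Sym2 V)) e : ℕ) with hencdef
  have hN : ∀ e, enc e < N := fun e =>
    Nat.lt_succ_of_lt ((Fintype.equivFin (Sym2 V)) e).2
  have hencInj : Function.Injective enc := fun e f hh =>
    (Fintype.equivFin (Sym2 V)).injective (Fin.ext hh)
  refine ⟨greedy T r enc N, ?_, ?_⟩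
  · -- strong coloring
    intro e he f hf hcf
    have hne := hcf.1
    rcases (erank_ne T r hN hencInj hne).lt_or_gt with hlt | hlt
    · exact greedy_valid T r enc N he (edgeConflict_symm hcf) hlt
    · exact (greedy_valid T r enc N hf hcf hlt).symm
  · -- bound
    have key : ∀ p c, T.Adj p c → T.dist r p + 1 = T.dist r c →
        greedy T r enc N s(p, c) < M := by
      intro p c hpc hd
      -- choose the parent w of p (or p itself if p = r)
      obtain ⟨w, hw⟩ : ∃ w, (T.dist r p = 0 ∧ w = p) ∨
          (T.Adj w p ∧ T.dist r w + 1 = T.dist r p) := by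
        by_cases h0 : T.dist r p = 0
        · exact ⟨p, Or.inl ⟨h0, rfl⟩⟩
        · have hpr : p ≠ r := by
            intro hh
            subst hh
            simp [SimpleGraph.dist_self] at h0
          obtain ⟨u, hu1, hu2⟩ := exists_parent hT.isConnected r hpr
          exact ⟨u, Or.inr ⟨hu1, hu2⟩⟩
      have hM1 : 1 ≤ M := by
        have := hM p c hpc
        have hdp : 0 < T.degree p := by
          rw [SimpleGraph.degree_pos_iff_exists_adj]
          exact ⟨c, hpc⟩
        have hdc : 0 < T.degree c := by
          rw [SimpleGraph.degree_pos_iff_exists_adj]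
          exact ⟨p, hpc.symm⟩
        omega
      set W : Finset (Sym2 V) :=
        (T.incidenceFinset p ∪ T.incidenceFinset w).erase s(p, c) with hWdef
      have hpcW : s(p, c) ∈ T.incidenceFinset p ∪ T.incidenceFinset w := by
        rw [Finset.mem_union, SimpleGraph.mem_incidenceFinset]
        exact Or.inl ⟨hpc, Sym2.mem_mk_left p c⟩
      have hWcard : W.card < M := by
        rw [hWdef, Finset.card_erase_of_mem hpcW]
        rcases hw with ⟨h0, hwp⟩ | ⟨hwp, hwd⟩
        · rw [hwp, Finset.union_self, SimpleGraph.card_incidenceFinset_eq_degree]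
          have h1 := hM p c hpc
          have hdc : 0 < T.degree c := by
            rw [SimpleGraph.degree_pos_iff_exists_adj]
            exact ⟨p, hpc.symm⟩
          omega
        · have hsub := Finset.card_union_add_card_inter
            (T.incidenceFinset p) (T.incidenceFinset w)
          have hmemI : s(p, w) ∈ T.incidenceFinset p ∩ T.incidenceFinset w := by
            rw [Finset.mem_inter, SimpleGraph.mem_incidenceFinset,
              SimpleGraph.mem_incidenceFinset]
            exact ⟨⟨hwp.symm, Sym2.mem_mk_left p w⟩, ⟨hwp.symm, Sym2.mem_mk_right p w⟩⟩
          have hIpos : 0 < (T.incidenceFinset p ∩ T.incidenceFinset w).card :=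
            Finset.card_pos.mpr ⟨_, hmemI⟩
          rw [SimpleGraph.card_incidenceFinset_eq_degree,
            SimpleGraph.card_incidenceFinset_eq_degree] at hsub
          have h1 := hM w p hwp
          omega
      set F : Finset ℕ := W.image (greedy T r enc N) with hFdef
      have hF : F.card < M := lt_of_le_of_lt Finset.card_image_le hWcard
      have hsd : (Finset.range M \ F).Nonempty := by
        rw [← Finset.card_pos]
        have := Finset.card_le_card_sdiff_add_card (s := Finset.range M) (t := F)
        rw [Finset.card_range] at this
        omega
      obtain ⟨n, hn⟩ := hsd
      rw [Finset.mem_sdiff, Finset.mem_range] at hn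
      have hle : greedy T r enc N s(p, c) ≤ n := by
        apply greedy_le
        intro f hf hcf hr
        have hfW : f ∈ W := by
          rw [hWdef, Finset.mem_erase]
          refine ⟨hcf.1.symm, ?_⟩
          have hdepth : ∀ z ∈ f, T.dist r z ≤ T.dist r c := by
            intro z hz
            have h1 : T.dist r z ≤ edepth T r f := dist_le_edepth hz
            have h2 : edepth T r f ≤ edepth T r s(p, c) :=
              edepth_le_of_erank_lt T r hN hr
            have h3 : edepth T r s(p, c) = T.dist r c := by
              rw [edepth_mk]
              omega
            omega
          rcases conflict_endpoint hT r hpc hd hw hf hcf hdepth with hh | hh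
          · rw [Finset.mem_union, SimpleGraph.mem_incidenceFinset]
            exact Or.inl ⟨hf, hh⟩
          · rw [Finset.mem_union, SimpleGraph.mem_incidenceFinset,
              SimpleGraph.mem_incidenceFinset]
            exact Or.inr ⟨hf, hh⟩
        intro heq
        apply hn.2
        rw [hFdef, Finset.mem_image]
        exact ⟨f, hfW, heq⟩
      omega
    intro e he
    induction e with
    | _ u v =>
      rw [SimpleGraph.mem_edgeSet] at he
      rcases tree_adj_dist hT r he with h1 | h1
      · exact key u v he h1.symm
      · rw [Sym2.eq_swap]
        exact key v u he.symm h1.symm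
  
end StrongTreeAux

/-- For a tree `T`, the strong chromatic index equals
`max {d(u) + d(v) - 1 | (u,v) ∈ E(T)}`. -/
theorem strongChromaticIndex_tree {V : Type*} [Fintype V] (T : SimpleGraph V)
    [DecidableRel T.Adj] (hT : T.IsTree) :
    strongChromaticIndex T =
      sSup {n | ∃ u v, T.Adj u v ∧ n = T.degree u + T.degree v - 1} := by
  classical
  set S := {n | ∃ u v, T.Adj u v ∧ n = T.degree u + T.degree v - 1} with hSdef
  have hbdd : BddAbove S := by
    refine ⟨2 * Fintype.card V, ?_⟩
    rintro n ⟨u, v, h, rfl⟩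
    have hu : T.degree u ≤ Fintype.card V := by
      rw [← SimpleGraph.card_neighborFinset_eq_degree]
      exact Finset.card_le_univ _
    have hv : T.degree v ≤ Fintype.card V := by
      rw [← SimpleGraph.card_neighborFinset_eq_degree]
      exact Finset.card_le_univ _
    omega
  have hM : ∀ u v, T.Adj u v → T.degree u + T.degree v - 1 ≤ sSup S := by
    intro u v h
    exact le_csSup hbdd ⟨u, v, h, rfl⟩
  obtain ⟨C, hC, hCb⟩ := StrongTreeAux.exists_strong_coloring T hT (sSup S) hM
  have hmem : sSup S ∈ {k | ∃ C : Sym2 V → ℕ,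
      IsStrongEdgeColoring T C ∧ ∀ e ∈ T.edgeSet, C e < k} := ⟨C, hC, hCb⟩
  have h1 : strongChromaticIndex T ≤ sSup S := Nat.sInf_le hmem
  have h2 : sSup S ≤ strongChromaticIndex T := by
    obtain ⟨C', hC', hC'b⟩ := Nat.sInf_mem (⟨sSup S, hmem⟩ : Set.Nonempty _)
    by_cases hne : S.Nonempty
    · refine csSup_le hne ?_
      rintro n ⟨u, v, h, rfl⟩
      exact StrongTreeAux.lower_bound hC' hC'b h
    · rw [Set.not_nonempty_iff_eq_empty.mp hne, csSup_empty]
      exact Nat.zero_le _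
  exact le_antisymm h1 h2
end

section
/- The square of the line graph of any tree is a chordal graph. -/
open SimpleGraph

/-- The square of the line graph of `G`: vertices are the edges of `G`, two edges being
adjacent iff they are at distance at most one in `G` (distance at most two in `L(G)`). -/
def lineGraphSq {V : Type*} (G : SimpleGraph V) : SimpleGraph G.edgeSet where
  Adj e f := edgeConflict G e.1 f.1
  symm := ⟨by
    rintro ⟨e, he⟩ ⟨f, hf⟩ ⟨hne, a, ha, b, hb, hab⟩
    refine ⟨fun h => hne (by simpa using h.symm), b, hb, a, ha, ?_⟩
    rcases hab with h | h
    · exact Or.inl h.symm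
    · exact Or.inr h.symm⟩
  loopless := ⟨by rintro ⟨e, he⟩ ⟨hne, -⟩; exact hne rfl⟩

/-- A graph is chordal iff it has no induced cycle of length at least 4. -/
def IsChordal {V : Type*} (G : SimpleGraph V) : Prop :=
  ∀ n : ℕ, 4 ≤ n → IsEmpty (cycleGraph n ↪g G)

section TreeAux

variable {V : Type*} {T : SimpleGraph V}

private lemma exists_spath (hc : T.Connected) (r u : V) :
    ∃ p : T.Walk r u, p.IsPath ∧ p.length = T.dist r u := by
  classical
  obtain ⟨p, hp⟩ := hc.exists_walk_length_eq_dist r u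
  refine ⟨p.bypass, p.bypass_isPath, le_antisymm ?_ (dist_le _)⟩
  rw [← hp]
  exact p.length_bypass_le

private lemma mem_support_bound {a b v : V} (p : T.Walk a b) (hv : v ∈ p.support) :
    T.dist a v + T.dist v b ≤ p.length := by
  classical
  have h1 : T.dist a v ≤ (p.takeUntil v hv).length := dist_le _
  have h2 : T.dist v b ≤ (p.dropUntil v hv).length := dist_le _
  have h3 := congrArg Walk.length (p.take_spec hv)
  rw [Walk.length_append] at h3
  omega

private lemma no_tie (hT : T.IsTree) (r : V) {u v : V} (h : T.Adj u v) :
    T.dist r u ≠ T.dist r v := by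
  intro heq
  obtain ⟨p, hp, hplen⟩ := exists_spath hT.isConnected r u
  have hvp : v ∉ p.support := by
    intro hmem
    have hb := mem_support_bound p hmem
    have hpos : 0 < T.dist v u := hT.isConnected.pos_dist_of_ne h.ne'
    omega
  have hp' : (p.concat h).IsPath := by
    rw [← Walk.isPath_reverse_iff, Walk.reverse_concat, Walk.cons_isPath_iff]
    refine ⟨hp.reverse, ?_⟩
    rw [Walk.support_reverse]
    simpa using hvp
  obtain ⟨q, hq, hqlen⟩ := exists_spath hT.isConnected r v
  have huniq := isAcyclic_iff_path_unique.mp hT.IsAcyclic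
      (⟨p.concat h, hp'⟩ : T.Path r v) ⟨q, hq⟩
  have hw : p.concat h = q := congrArg Subtype.val huniq
  have hlen : (p.concat h).length = q.length := congrArg Walk.length hw
  rw [Walk.length_concat] at hlen
  omega

private lemma unique_parent (hT : T.IsTree) (r : V) {u v v' : V} (hv : T.Adj u v)
    (hv' : T.Adj u v') (hd : T.dist r v < T.dist r u) (hd' : T.dist r v' < T.dist r u) :
    v = v' := by
  obtain ⟨p, hp, hplen⟩ := exists_spath hT.isConnected r v
  obtain ⟨q, hq, hqlen⟩ := exists_spath hT.isConnected r v'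
  have hup : u ∉ p.support := by
    intro hmem
    have hb := mem_support_bound p hmem
    have hpos : 0 < T.dist u v := hT.isConnected.pos_dist_of_ne hv.ne
    omega
  have huq : u ∉ q.support := by
    intro hmem
    have hb := mem_support_bound q hmem
    have hpos : 0 < T.dist u v' := hT.isConnected.pos_dist_of_ne hv'.ne
    omega
  have hp' : (p.concat hv.symm).IsPath := by
    rw [← Walk.isPath_reverse_iff, Walk.reverse_concat, Walk.cons_isPath_iff]
    exact ⟨hp.reverse, by rw [Walk.support_reverse]; simpa using hup⟩
  have hq' : (q.concat hv'.symm).IsPath := by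
    rw [← Walk.isPath_reverse_iff, Walk.reverse_concat, Walk.cons_isPath_iff]
    exact ⟨hq.reverse, by rw [Walk.support_reverse]; simpa using huq⟩
  have huniq := isAcyclic_iff_path_unique.mp hT.IsAcyclic
      (⟨p.concat hv.symm, hp'⟩ : T.Path r u) ⟨q.concat hv'.symm, hq'⟩
  have hw : p.concat hv.symm = q.concat hv'.symm := congrArg Subtype.val huniq
  have hs := congrArg (fun w : T.Walk r u => w.reverse.support) hw
  simp only [Walk.reverse_concat, Walk.support_cons] at hs
  have h2 : p.reverse.support = q.reverse.support := by injection hs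
  rw [Walk.support_eq_cons p.reverse, Walk.support_eq_cons q.reverse] at h2
  injection h2

private lemma depth_step (hT : T.IsTree) (r : V) {a b : V} (h : T.Adj a b) :
    T.dist r b = T.dist r a + 1 ∨ T.dist r a = T.dist r b + 1 := by
  have hab : T.dist a b = 1 := dist_eq_one_iff_adj.mpr h
  have hba : T.dist b a = 1 := dist_eq_one_iff_adj.mpr h.symm
  have h1 := hT.isConnected.dist_triangle (u := r) (v := a) (w := b)
  have h2 := hT.isConnected.dist_triangle (u := r) (v := b) (w := a)
  have h3 := no_tie hT r h
  omega

private noncomputable def edgeDepth (T : SimpleGraph V) (r : V) (e : Sym2 V) : ℕ :=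
  Sym2.lift ⟨fun a b => max (T.dist r a) (T.dist r b), fun _ _ => max_comm _ _⟩ e

@[simp] private lemma edgeDepth_mk (r a b : V) :
    edgeDepth T r s(a, b) = max (T.dist r a) (T.dist r b) := rfl

private lemma dist_le_edgeDepth (r : V) (e : Sym2 V) :
    ∀ x ∈ e, T.dist r x ≤ edgeDepth T r e := by
  induction e using Sym2.ind with
  | _ a b =>
    intro x hx
    rw [Sym2.mem_iff] at hx
    rcases hx with rfl | rfl
    · exact le_max_left _ _
    · exact le_max_right _ _

private lemma far_endpoint (hT : T.IsTree) (r : V) {w x : V} {f : Sym2 V}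
    (hf : f ∈ T.edgeSet) (hx : x ∈ f) (hwx : T.Adj w x)
    (hDx : T.dist r x = T.dist r w + 1) (hdf : edgeDepth T r f ≤ T.dist r w + 1) :
    w ∈ f := by
  obtain ⟨c, rfl⟩ := Sym2.mem_iff_exists.mp hx
  have hxc : T.Adj x c := T.mem_edgeSet.mp hf
  have hDc : T.dist r c ≤ T.dist r w + 1 :=
    le_trans (dist_le_edgeDepth r _ c (by simp)) hdf
  have hstep := depth_step hT r hxc
  have hcw : c = w := unique_parent hT r hxc hwx.symm (by omega) (by omega)
  subst hcw
  simp

private lemma near_endpoint (hT : T.IsTree) (r : V) {w z : V} (hwz : T.Adj w z)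
    (hz : T.dist r z = T.dist r w + 1) {f : Sym2 V} (hf : f ∈ T.edgeSet)
    (hef : edgeConflict T s(w, z) f) (hdf : edgeDepth T r f ≤ T.dist r w + 1) :
    ∃ x ∈ f, x = w ∨ T.Adj w x := by
  obtain ⟨hne, a, ha, b, hb, hab⟩ := hef
  rw [Sym2.mem_iff] at ha
  rcases ha with rfl | rfl
  · rcases hab with heq | hadj
    · exact ⟨b, hb, Or.inl heq.symm⟩
    · exact ⟨b, hb, Or.inr hadj⟩
  · rcases hab with heq | hadj
    · have hzf : a ∈ f := heq ▸ hb
      have hwf : w ∈ f := far_endpoint hT r hf hzf hwz hz hdf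
      exact ⟨w, hwf, Or.inl rfl⟩
    · have hDb : T.dist r b ≤ T.dist r w + 1 := le_trans (dist_le_edgeDepth r f b hb) hdf
      have hstep := depth_step hT r hadj
      have hbw : b = w := unique_parent hT r hadj hwz.symm (by omega) (by omega)
      exact ⟨b, hb, Or.inl hbw⟩

private lemma conflict_of_max (hT : T.IsTree) (r : V) {w z : V} (hwz : T.Adj w z)
    (hz : T.dist r z = T.dist r w + 1) {f g : Sym2 V} (hf : f ∈ T.edgeSet) (hg : g ∈ T.edgeSet)
    (hef : edgeConflict T s(w, z) f) (heg : edgeConflict T s(w, z) g) (hfg : f ≠ g)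
    (hdf : edgeDepth T r f ≤ T.dist r w + 1) (hdg : edgeDepth T r g ≤ T.dist r w + 1) :
    edgeConflict T f g := by
  obtain ⟨x, hxf, hx⟩ := near_endpoint hT r hwz hz hf hef hdf
  obtain ⟨y, hyg, hy⟩ := near_endpoint hT r hwz hz hg heg hdg
  refine ⟨hfg, ?_⟩
  rcases hx with rfl | hwx
  · refine ⟨x, hxf, y, hyg, ?_⟩
    rcases hy with rfl | hwy
    · exact Or.inl rfl
    · exact Or.inr hwy
  · rcases hy with rfl | hwy
    · exact ⟨x, hxf, y, hyg, Or.inr hwx.symm⟩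
    · by_cases hxy : x = y
      · exact ⟨x, hxf, y, hyg, Or.inl hxy⟩
      · rcases depth_step hT r hwx with hx1 | hx2
        · have hwf : w ∈ f := far_endpoint hT r hf hxf hwx hx1 hdf
          exact ⟨w, hwf, y, hyg, Or.inr hwy⟩
        · rcases depth_step hT r hwy with hy1 | hy2
          · have hwg : w ∈ g := far_endpoint hT r hg hyg hwy hy1 hdg
            exact ⟨x, hxf, w, hwg, Or.inr hwx.symm⟩
          · exact absurd (unique_parent hT r hwx hwy (by omega) (by omega)) hxy

private lemma conflict_trans (hT : T.IsTree) (r : V) {e f g : Sym2 V} (he : e ∈ T.edgeSet)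
    (hf : f ∈ T.edgeSet) (hg : g ∈ T.edgeSet) (hef : edgeConflict T e f)
    (heg : edgeConflict T e g) (hfg : f ≠ g) (hdf : edgeDepth T r f ≤ edgeDepth T r e)
    (hdg : edgeDepth T r g ≤ edgeDepth T r e) : edgeConflict T f g := by
  revert he hef heg hdf hdg
  induction e using Sym2.ind with
  | _ w z =>
    intro he hef heg hdf hdg
    have hwz : T.Adj w z := T.mem_edgeSet.mp he
    rcases depth_step hT r hwz with h1 | h1
    · have hmax : edgeDepth T r s(w, z) = T.dist r w + 1 := by
        rw [edgeDepth_mk]; omega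
      exact conflict_of_max hT r hwz h1 hf hg hef heg hfg (hmax ▸ hdf) (hmax ▸ hdg)
    · rw [Sym2.eq_swap (a := w) (b := z)] at hef heg
      have hmax : edgeDepth T r s(w, z) = T.dist r z + 1 := by
        rw [edgeDepth_mk]; omega
      exact conflict_of_max hT r hwz.symm h1 hf hg hef heg hfg (hmax ▸ hdf) (hmax ▸ hdg)

end TreeAux

/-- The square of the line graph of a tree is chordal. -/
theorem isChordal_lineGraphSq_tree {V : Type*} (T : SimpleGraph V) (hT : T.IsTree) :
    IsChordal (lineGraphSq T) := by
  intro n hn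
  obtain ⟨m, rfl⟩ : ∃ m, n = m + 2 := ⟨n - 2, by omega⟩
  have hm : 2 ≤ m := by omega
  constructor
  intro φ
  obtain ⟨r⟩ := hT.isConnected.nonempty
  obtain ⟨i, hi⟩ := Finite.exists_max (fun j : Fin (m + 2) => edgeDepth T r (φ j).1)
  have hadj1 : (cycleGraph (m + 2)).Adj i (i - 1) := by
    rw [cycleGraph_adj]; left; exact sub_sub_cancel i 1
  have hadj2 : (cycleGraph (m + 2)).Adj i (i + 1) := by
    rw [cycleGraph_adj]; right; exact add_sub_cancel_left i 1
  have hne12 : (i - 1 : Fin (m + 2)) ≠ i + 1 := by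
    intro h
    open Fin.NatCast Fin.CommRing in have h2 : ((2 : ℕ) : Fin (m + 2)) = 0 := by push_cast; linear_combination -h
    open Fin.NatCast Fin.CommRing in have h3 := Nat.le_of_dvd (by norm_num) (Fin.natCast_eq_zero.mp h2)
    omega
  have hnadj : ¬ (cycleGraph (m + 2)).Adj (i - 1) (i + 1) := by
    rw [cycleGraph_adj]
    push_neg
    constructor
    · intro h
      open Fin.NatCast Fin.CommRing in have h2 : ((3 : ℕ) : Fin (m + 2)) = 0 := by push_cast; linear_combination -h
      open Fin.NatCast Fin.CommRing in have h3 := Nat.le_of_dvd (by norm_num) (Fin.natCast_eq_zero.mp h2)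
      omega
    · intro h
      open Fin.NatCast Fin.CommRing in have h2 : ((1 : ℕ) : Fin (m + 2)) = 0 := by push_cast; linear_combination h
      open Fin.NatCast Fin.CommRing in have h3 := Nat.le_of_dvd (by norm_num) (Fin.natCast_eq_zero.mp h2)
      omega
  have hef : edgeConflict T (φ i).1 (φ (i - 1)).1 := φ.map_adj_iff.mpr hadj1
  have heg : edgeConflict T (φ i).1 (φ (i + 1)).1 := φ.map_adj_iff.mpr hadj2
  have hfg : (φ (i - 1)).1 ≠ (φ (i + 1)).1 := by
    intro h
    exact hne12 (φ.injective (Subtype.ext h))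
  have hconf := conflict_trans hT r (φ i).2 (φ (i - 1)).2 (φ (i + 1)).2 hef heg hfg
      (hi (i - 1)) (hi (i + 1))
  exact hnadj (φ.map_adj_iff.mp hconf)
end
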